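/- arXiv:1301.7474 — 2 statements merged into one kernel-verified Lean document; each statement's English description precedes it below -/
import Mathlib

section
/- Let a, b, c be real numbers with c > 0 and c − a − b > 0, and suppose neither c − a nor c − b is a nonpositive integer. Then the Gauss hypergeometric series at 1 satisfies ₂F₁(a, b; c; 1) = ∑_{n≥0} (a)ₙ(b)ₙ/((c)ₙ n!) = Γ(c)Γ(c−a−b) / (Γ(c−a)Γ(c−b)). -/
/-!
Write `tₙ(c)` for the terms of `F(c) = ₂F₁(a, b; c; 1)`. Summing the termwise identity
`hypergeomCoeff_contiguous` telescopes, and since `n tₙ → 0` this gives the contiguous relation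
`F(c) = (c-a)(c-b) / (c(c-a-b)) · F(c+1)`; iterating,
`F(c) = (c-a)ₖ(c-b)ₖ / ((c)ₖ(c-a-b)ₖ) · F(c+k)`.
As `k → ∞`, `F(c+k) → 1` because `|tₙ₊₁(c+k)| ≤ c/(c+k) · |tₙ₊₁(c)|`, while Euler's limit
`Γ(x) = lim nˣ n! / (x)ₙ₊₁` turns the Pochhammer ratio into `Γ(c)Γ(c-a-b) / (Γ(c-a)Γ(c-b))`.
The same limit formula shows `tₙ = O(n^{-(1+c-a-b)})`, which gives convergence and `n tₙ → 0`.
-/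

open scoped BigOperators

/-- The Pochhammer symbol `(a)ₙ = a (a+1) ⋯ (a+n-1)`. -/
noncomputable def poch (a : ℝ) (n : ℕ) : ℝ := ∏ i ∈ Finset.range n, (a + i)

/-- The Gauss hypergeometric series `₂F₁(a, b; c; x)`. -/
noncomputable def F21 (a b c x : ℝ) : ℝ :=
  ∑' n : ℕ, poch a n * poch b n / (poch c n * (Nat.factorial n : ℝ)) * x ^ n

open Filter Topology Asymptotics
open scoped Nat

section Pochhammer

variable {x y : ℝ}

@[simp] lemma poch_zero (x : ℝ) : poch x 0 = 1 := Finset.prod_range_zero _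

lemma poch_succ (x : ℝ) (n : ℕ) : poch x (n + 1) = poch x n * (x + n) :=
  Finset.prod_range_succ _ _

lemma poch_succ' (x : ℝ) (n : ℕ) : poch x (n + 1) = x * poch (x + 1) n := by
  rw [poch, Finset.prod_range_succ', mul_comm, poch]
  push_cast
  simp only [add_zero, add_assoc, add_comm (1 : ℝ)]

lemma poch_pos (hx : 0 < x) (n : ℕ) : 0 < poch x n :=
  Finset.prod_pos fun _ _ => by positivity

lemma poch_ne_zero (hx : ∀ m : ℕ, x ≠ -m) (n : ℕ) : poch x n ≠ 0 :=
  Finset.prod_ne_zero_iff.2 fun i _ h => hx i (by linarith)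

lemma poch_neg_natCast_eq_zero {m n : ℕ} (hmn : m < n) : poch (-m) n = 0 :=
  Finset.prod_eq_zero (Finset.mem_range.2 hmn) (neg_add_cancel _)

lemma poch_le_poch (hx : 0 < x) (hxy : x ≤ y) (n : ℕ) : poch x n ≤ poch y n :=
  Finset.prod_le_prod (fun _ _ => by positivity) fun _ _ => by linarith

lemma GammaSeq_eq_div_poch (x : ℝ) (n : ℕ) :
    Real.GammaSeq x n = (n : ℝ) ^ x * n ! / poch x (n + 1) := rfl

lemma poch_div_poch_eq_GammaSeq_div_GammaSeq {x y z w : ℝ} (hsum : x + y = z + w) {n : ℕ}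
    (hn : n ≠ 0) (hx : poch x (n + 1) ≠ 0) (hy : poch y (n + 1) ≠ 0)
    (hz : poch z (n + 1) ≠ 0) (hw : poch w (n + 1) ≠ 0) :
    poch z (n + 1) * poch w (n + 1) / (poch x (n + 1) * poch y (n + 1)) =
      Real.GammaSeq x n * Real.GammaSeq y n / (Real.GammaSeq z n * Real.GammaSeq w n) := by
  have hn : (0 : ℝ) < n := by positivity
  have hpow : (n : ℝ) ^ x * (n : ℝ) ^ y = (n : ℝ) ^ z * (n : ℝ) ^ w := by
    rw [← Real.rpow_add hn, ← Real.rpow_add hn, hsum]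
  have := Real.rpow_pos_of_pos hn z
  have := Real.rpow_pos_of_pos hn w
  simp only [GammaSeq_eq_div_poch]
  field_simp
  exact hpow.symm

end Pochhammer

noncomputable def hypergeomCoeff (a b c : ℝ) (n : ℕ) : ℝ :=
  poch a n * poch b n / (poch c n * n !)

lemma F21_one_eq_tsum (a b c : ℝ) : F21 a b c 1 = ∑' n, hypergeomCoeff a b c n := by
  simp [F21, hypergeomCoeff]

section HypergeomCoeff

variable {a b c : ℝ}

@[simp] lemma hypergeomCoeff_zero (a b c : ℝ) : hypergeomCoeff a b c 0 = 1 := by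
  simp [hypergeomCoeff]

lemma hypergeomCoeff_comm (a b c : ℝ) : hypergeomCoeff a b c = hypergeomCoeff b a c := by
  ext n
  rw [hypergeomCoeff, hypergeomCoeff, mul_comm (poch a n)]

lemma hypergeomCoeff_neg_natCast_eventually_eq_zero (b c : ℝ) (m : ℕ) :
    ∀ᶠ n in atTop, hypergeomCoeff (-m) b c n = 0 := by
  filter_upwards [eventually_gt_atTop m] with n hn
  simp [hypergeomCoeff, poch_neg_natCast_eq_zero hn]

lemma hypergeomCoeff_contiguous (a b : ℝ) (hc : 0 < c) (n : ℕ) :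
    (c - a) * (c - b) / c * hypergeomCoeff a b (c + 1) n - (c - a - b) * hypergeomCoeff a b c n
      = (n + 1) * hypergeomCoeff a b c (n + 1) - n * hypergeomCoeff a b c n := by
  have := (poch_pos hc n).ne'
  have : c + n ≠ 0 := by positivity
  have hpoch : poch (c + 1) n = poch c n * (c + n) / c := by
    rw [eq_div_iff hc.ne', mul_comm, ← poch_succ', poch_succ]
  simp only [hypergeomCoeff, poch_succ, hpoch, Nat.factorial_succ]
  push_cast
  field_simp
  ring

lemma succ_mul_rpow_mul_hypergeomCoeff_succ (hc : 0 < c) {n : ℕ} (hn : n ≠ 0) :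
    (n + 1) * (n : ℝ) ^ (c - a - b) * hypergeomCoeff a b c (n + 1)
      = Real.GammaSeq c n / (Real.GammaSeq a n * Real.GammaSeq b n) := by
  have hn : (0 : ℝ) < n := by positivity
  have := poch_pos hc (n + 1)
  have := Real.rpow_pos_of_pos hn a
  have := Real.rpow_pos_of_pos hn b
  have hpow : (n : ℝ) ^ (c - a - b) = (n : ℝ) ^ c / ((n : ℝ) ^ a * (n : ℝ) ^ b) := by
    rw [sub_sub, Real.rpow_sub hn, Real.rpow_add hn]
  rw [GammaSeq_eq_div_poch, GammaSeq_eq_div_poch, GammaSeq_eq_div_poch,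
    hypergeomCoeff, hpow, Nat.factorial_succ]
  push_cast
  field_simp

lemma exists_tendsto_succ_mul_rpow_mul_hypergeomCoeff_succ (a b : ℝ) (hc : 0 < c) :
    ∃ L, Tendsto (fun n : ℕ => (n + 1) * (n : ℝ) ^ (c - a - b) * hypergeomCoeff a b c (n + 1))
      atTop (𝓝 L) := by
  by_cases ha : ∃ m : ℕ, a = -m
  · obtain ⟨m, rfl⟩ := ha
    refine ⟨0, tendsto_const_nhds.congr' ?_⟩
    filter_upwards [(tendsto_add_atTop_nat 1).eventually
      (hypergeomCoeff_neg_natCast_eventually_eq_zero b c m)] with n hn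
    simp [hn]
  by_cases hb : ∃ m : ℕ, b = -m
  · obtain ⟨m, rfl⟩ := hb
    refine ⟨0, tendsto_const_nhds.congr' ?_⟩
    filter_upwards [(tendsto_add_atTop_nat 1).eventually
      (hypergeomCoeff_neg_natCast_eventually_eq_zero a c m)] with n hn
    simp [hypergeomCoeff_comm a, hn]
  push Not at ha hb
  have hGamma := (Real.GammaSeq_tendsto_Gamma c).div ((Real.GammaSeq_tendsto_Gamma a).mul
    (Real.GammaSeq_tendsto_Gamma b)) (mul_ne_zero (Real.Gamma_ne_zero ha) (Real.Gamma_ne_zero hb))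
  refine ⟨_, hGamma.congr' ?_⟩
  filter_upwards [eventually_ne_atTop 0] with n hn
  exact (succ_mul_rpow_mul_hypergeomCoeff_succ hc hn).symm

lemma isBigO_hypergeomCoeff_succ (a b : ℝ) (hc : 0 < c) :
    (fun n : ℕ => hypergeomCoeff a b c (n + 1)) =O[atTop]
      fun n : ℕ => (n : ℝ) ^ (-(1 + (c - a - b))) := by
  obtain ⟨L, hL⟩ := exists_tendsto_succ_mul_rpow_mul_hypergeomCoeff_succ a b hc
  have hinv : (fun n : ℕ => ((n + 1) * (n : ℝ) ^ (c - a - b))⁻¹) =O[atTop]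
      fun n : ℕ => (n : ℝ) ^ (-(1 + (c - a - b))) := by
    refine IsBigO.of_bound 1 ?_
    filter_upwards [eventually_gt_atTop 0] with n hn
    have hn : (0 : ℝ) < n := by exact_mod_cast hn
    rw [one_mul, Real.norm_of_nonneg (by positivity), Real.norm_of_nonneg (by positivity),
      Real.rpow_neg hn.le, Real.rpow_add hn, Real.rpow_one]
    gcongr
    linarith
  refine ((hL.isBigO_one ℝ).mul hinv).congr' ?_ (by simp)
  filter_upwards [eventually_gt_atTop 0] with n hn
  have : (0 : ℝ) < (n + 1) * (n : ℝ) ^ (c - a - b) := by positivity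
  field_simp

lemma summable_abs_hypergeomCoeff_succ (a b : ℝ) (hc : 0 < c) (hcab : 0 < c - a - b) :
    Summable fun n => |hypergeomCoeff a b c (n + 1)| :=
  summable_of_isBigO_nat (Real.summable_nat_rpow.2 (by linarith))
    (isBigO_hypergeomCoeff_succ a b hc).abs_left

lemma summable_hypergeomCoeff (a b : ℝ) (hc : 0 < c) (hcab : 0 < c - a - b) :
    Summable (hypergeomCoeff a b c) :=
  (summable_nat_add_iff (f := hypergeomCoeff a b c) 1).1
    (summable_abs_hypergeomCoeff_succ a b hc hcab).of_abs

lemma tendsto_natCast_mul_hypergeomCoeff (a b : ℝ) (hc : 0 < c) (hcab : 0 < c - a - b) :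
    Tendsto (fun n : ℕ => n * hypergeomCoeff a b c n) atTop (𝓝 0) := by
  obtain ⟨L, hL⟩ := exists_tendsto_succ_mul_rpow_mul_hypergeomCoeff_succ a b hc
  have := hL.mul ((tendsto_rpow_neg_atTop hcab).comp tendsto_natCast_atTop_atTop)
  rw [mul_zero] at this
  rw [← tendsto_add_atTop_iff_nat 1]
  refine this.congr' ?_
  filter_upwards [eventually_gt_atTop 0] with n hn
  have hn : (0 : ℝ) < n := by exact_mod_cast hn
  have := Real.rpow_pos_of_pos hn (c - a - b)
  simp only [Function.comp_apply, Real.rpow_neg hn.le]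
  push_cast
  field_simp

lemma tsum_hypergeomCoeff_eq_mul_tsum_add_one (a b : ℝ) (hc : 0 < c) (hcab : 0 < c - a - b) :
    ∑' n, hypergeomCoeff a b c n =
      (c - a) * (c - b) / (c * (c - a - b)) * ∑' n, hypergeomCoeff a b (c + 1) n := by
  have hpartial (N : ℕ) :
      (c - a) * (c - b) / c * ∑ n ∈ Finset.range N, hypergeomCoeff a b (c + 1) n
        - (c - a - b) * ∑ n ∈ Finset.range N, hypergeomCoeff a b c n
        = N * hypergeomCoeff a b c N := by
    rw [Finset.mul_sum, Finset.mul_sum, ← Finset.sum_sub_distrib,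
      Finset.sum_congr rfl fun n _ => hypergeomCoeff_contiguous a b hc n]
    simpa using Finset.sum_range_sub (fun n : ℕ => (n : ℝ) * hypergeomCoeff a b c n) N
  have hlim := (((summable_hypergeomCoeff a b (by linarith) (by linarith)).hasSum.tendsto_sum_nat
    |>.const_mul ((c - a) * (c - b) / c)).sub
    ((summable_hypergeomCoeff a b hc hcab).hasSum.tendsto_sum_nat.const_mul (c - a - b))).congr
    hpartial
  have := tendsto_nhds_unique hlim (tendsto_natCast_mul_hypergeomCoeff a b hc hcab)
  field_simp at this ⊢
  linarith

lemma tsum_hypergeomCoeff_eq_mul_tsum_add_nat (a b : ℝ) (hc : 0 < c) (hcab : 0 < c - a - b)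
    (k : ℕ) :
    ∑' n, hypergeomCoeff a b c n =
      poch (c - a) k * poch (c - b) k / (poch c k * poch (c - a - b) k) *
        ∑' n, hypergeomCoeff a b (c + k) n := by
  induction k with
  | zero => simp
  | succ k ih =>
    have hck : 0 < c + k := by positivity
    have hckab : 0 < c + k - a - b := by linarith [(Nat.cast_nonneg k : (0 : ℝ) ≤ k)]
    have := (poch_pos hc k).ne'
    have := (poch_pos hcab k).ne'
    rw [ih, tsum_hypergeomCoeff_eq_mul_tsum_add_one a b hck hckab, Nat.cast_succ, ← add_assoc,
      poch_succ, poch_succ, poch_succ, poch_succ]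
    field_simp
    ring

lemma abs_hypergeomCoeff_succ_le (a b : ℝ) {x y : ℝ} (hx : 0 < x) (hxy : x ≤ y) (n : ℕ) :
    |hypergeomCoeff a b y (n + 1)| ≤ x / y * |hypergeomCoeff a b x (n + 1)| := by
  have hy : 0 < y := hx.trans_le hxy
  have := poch_pos (show 0 < x + 1 by linarith) n
  have := poch_pos (show 0 < y + 1 by linarith) n
  have hpoch := poch_le_poch (show 0 < x + 1 by linarith) (show x + 1 ≤ y + 1 by linarith) n
  rw [hypergeomCoeff, hypergeomCoeff, poch_succ' x, poch_succ' y, abs_div, abs_div,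
    abs_of_pos (by positivity : 0 < y * poch (y + 1) n * (n + 1)!),
    abs_of_pos (by positivity : 0 < x * poch (x + 1) n * (n + 1)!)]
  calc |poch a (n + 1) * poch b (n + 1)| / (y * poch (y + 1) n * (n + 1)!)
      ≤ |poch a (n + 1) * poch b (n + 1)| / (y * poch (x + 1) n * (n + 1)!) := by
        gcongr
    _ = x / y * (|poch a (n + 1) * poch b (n + 1)| / (x * poch (x + 1) n * (n + 1)!)) := by
        field_simp

lemma abs_tsum_hypergeomCoeff_sub_one_le (a b : ℝ) {x y : ℝ} (hx : 0 < x) (hxy : x ≤ y)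
    (hxab : 0 < x - a - b) :
    |∑' n, hypergeomCoeff a b y n - 1| ≤ x / y * ∑' n, |hypergeomCoeff a b x (n + 1)| := by
  have hy : 0 < y := hx.trans_le hxy
  have hyab : 0 < y - a - b := by linarith
  have hSx := summable_abs_hypergeomCoeff_succ a b hx hxab
  have hSy := summable_abs_hypergeomCoeff_succ a b hy hyab
  rw [(summable_hypergeomCoeff a b hy hyab).tsum_eq_zero_add, hypergeomCoeff_zero,
    add_sub_cancel_left, ← tsum_mul_left]
  calc |∑' n, hypergeomCoeff a b y (n + 1)| ≤ ∑' n, |hypergeomCoeff a b y (n + 1)| :=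
        norm_tsum_le_tsum_norm (f := fun n => hypergeomCoeff a b y (n + 1)) hSy
    _ ≤ _ := hSy.tsum_le_tsum (abs_hypergeomCoeff_succ_le a b hx hxy) (hSx.mul_left _)

lemma tendsto_tsum_hypergeomCoeff_add_nat (a b : ℝ) (hc : 0 < c) (hcab : 0 < c - a - b) :
    Tendsto (fun k : ℕ => ∑' n, hypergeomCoeff a b (c + k) n) atTop (𝓝 1) := by
  rw [← tendsto_sub_nhds_zero_iff]
  have hbound (k : ℕ) := abs_tsum_hypergeomCoeff_sub_one_le a b hc
    (le_add_of_nonneg_right k.cast_nonneg) hcab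
  refine squeeze_zero_norm hbound ?_
  simpa using (tendsto_const_nhds.div_atTop
    (tendsto_atTop_add_const_left _ c tendsto_natCast_atTop_atTop)).mul_const _

end HypergeomCoeff

lemma tendsto_poch_div_poch {a b c : ℝ} (hc : 0 < c) (hcab : 0 < c - a - b)
    (hca : ∀ m : ℕ, c - a ≠ -m) (hcb : ∀ m : ℕ, c - b ≠ -m) :
    Tendsto (fun k => poch (c - a) k * poch (c - b) k / (poch c k * poch (c - a - b) k)) atTop
      (𝓝 (Real.Gamma c * Real.Gamma (c - a - b) / (Real.Gamma (c - a) * Real.Gamma (c - b)))) := by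
  rw [← tendsto_add_atTop_iff_nat 1]
  have hGamma :=
    ((Real.GammaSeq_tendsto_Gamma c).mul (Real.GammaSeq_tendsto_Gamma (c - a - b))).div
      ((Real.GammaSeq_tendsto_Gamma (c - a)).mul (Real.GammaSeq_tendsto_Gamma (c - b)))
      (mul_ne_zero (Real.Gamma_ne_zero hca) (Real.Gamma_ne_zero hcb))
  refine hGamma.congr' ?_
  filter_upwards [eventually_ne_atTop 0] with k hk
  exact (poch_div_poch_eq_GammaSeq_div_GammaSeq (by ring) hk (poch_pos hc _).ne'
    (poch_pos hcab _).ne' (poch_ne_zero hca _) (poch_ne_zero hcb _)).symm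

theorem gauss_summation (a b c : ℝ) (hc : 0 < c) (hcab : 0 < c - a - b)
    (hca : ∀ m : ℕ, c - a ≠ -(m : ℝ)) (hcb : ∀ m : ℕ, c - b ≠ -(m : ℝ)) :
    F21 a b c 1 =
      Real.Gamma c * Real.Gamma (c - a - b) /
        (Real.Gamma (c - a) * Real.Gamma (c - b)) := by
  have hlim := (tendsto_poch_div_poch hc hcab hca hcb).mul
    (tendsto_tsum_hypergeomCoeff_add_nat a b hc hcab)
  rw [mul_one] at hlim
  rw [F21_one_eq_tsum]
  exact tendsto_nhds_unique
    (tendsto_const_nhds.congr (tsum_hypergeomCoeff_eq_mul_tsum_add_nat a b hc hcab)) hlim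
end

section
/- For every real number a, one has π·a · ∑_{n≥0} (a)ₙ(−a)ₙ/(n!)² = sin(π a); equivalently, for a ≠ 0, ₂F₁(a, −a; 1; 1) = sin(π a)/(π a). -/
/-! Since `(a)ₙ (-a)ₙ = ∏_{i<n} (i² - a²)`, the partial sums telescope: the sum of the terms of
index `≤ n` is the partial Euler product `∏_{j=1}^{n} (1 - a²/j²)`, whose limit is
`sin (π a) / (π a)`. Boundedness of these products makes the terms `O(1/n²)`, so the series
converges unconditionally to the same limit. -/

open scoped BigOperators

open Finset Filter Topology Asymptotics Real
open scoped Nat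

lemma poch_one (n : ℕ) : poch 1 n = n ! := by
  rw [poch, ← prod_range_add_one_eq_factorial]
  push_cast
  exact prod_congr rfl fun i _ => add_comm _ _

lemma poch_mul_poch_neg (a : ℝ) (n : ℕ) :
    poch a n * poch (-a) n = ∏ i ∈ range n, ((i : ℝ) ^ 2 - a ^ 2) := by
  rw [poch, poch, ← prod_mul_distrib]
  exact prod_congr rfl fun i _ => by ring

lemma poch_mul_poch_neg_div_factorial_sq_succ (a : ℝ) (n : ℕ) :
    poch a (n + 1) * poch (-a) (n + 1) / ((n + 1)! : ℝ) ^ 2 =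
      -(a ^ 2 / ((n : ℝ) + 1) ^ 2) * ∏ j ∈ range n, (1 - a ^ 2 / ((j : ℝ) + 1) ^ 2) := by
  have hfac : ((n ! : ℕ) : ℝ) ^ 2 = ∏ j ∈ range n, ((j : ℝ) + 1) ^ 2 := by
    rw [← prod_range_add_one_eq_factorial, prod_pow]
    push_cast
    rfl
  have hfactor : ∀ j ∈ range n, 1 - a ^ 2 / ((j : ℝ) + 1) ^ 2 =
      (((j : ℝ) + 1) ^ 2 - a ^ 2) / ((j : ℝ) + 1) ^ 2 := fun j _ => by field_simp
  rw [poch_mul_poch_neg, prod_range_succ', prod_congr rfl hfactor, prod_div_distrib,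
    Nat.factorial_succ, Nat.cast_mul, mul_pow, hfac]
  push_cast
  have : ∏ j ∈ range n, ((j : ℝ) + 1) ^ 2 ≠ 0 := prod_ne_zero_iff.2 fun j _ => by positivity
  field_simp
  ring

lemma sum_range_succ_poch_mul_poch_neg_div_factorial_sq (a : ℝ) (n : ℕ) :
    ∑ k ∈ range (n + 1), poch a k * poch (-a) k / (k ! : ℝ) ^ 2 =
      ∏ j ∈ range n, (1 - a ^ 2 / ((j : ℝ) + 1) ^ 2) := by
  induction n with
  | zero => simp [poch]
  | succ n ih =>
    rw [sum_range_succ, ih, poch_mul_poch_neg_div_factorial_sq_succ, prod_range_succ]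
    ring

lemma tendsto_prod_one_sub_sq_div_sq {a : ℝ} (ha : a ≠ 0) :
    Tendsto (fun n : ℕ => ∏ j ∈ range n, (1 - a ^ 2 / ((j : ℝ) + 1) ^ 2)) atTop
      (𝓝 (sin (π * a) / (π * a))) := by
  have hπa : π * a ≠ 0 := mul_ne_zero pi_ne_zero ha
  simpa only [mul_div_cancel_left₀ _ hπa] using (tendsto_euler_sin_prod a).div_const (π * a)

lemma hasSum_poch_mul_poch_neg_div_factorial_sq {a : ℝ} (ha : a ≠ 0) :
    HasSum (fun n : ℕ => poch a n * poch (-a) n / (n ! : ℝ) ^ 2) (sin (π * a) / (π * a)) := by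
  have hprod := tendsto_prod_one_sub_sq_div_sq ha
  have hsummable : Summable (fun n : ℕ => poch a n * poch (-a) n / (n ! : ℝ) ^ 2) := by
    refine (summable_nat_add_iff 1).1 ?_
    simp only [poch_mul_poch_neg_div_factorial_sq_succ]
    have hinvsq : Summable (fun n : ℕ => a ^ 2 / ((n : ℝ) + 1) ^ 2) := by
      simpa [div_eq_mul_inv] using
        ((summable_nat_add_iff 1).2 (summable_nat_pow_inv.2 one_lt_two)).mul_left (a ^ 2)
    refine summable_of_isBigO_nat hinvsq ?_
    simpa using (isBigO_refl (fun n : ℕ => -(a ^ 2 / ((n : ℝ) + 1) ^ 2)) atTop).mul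
      (hprod.isBigO_one ℝ)
  have hpartial : Tendsto (fun n : ℕ => ∑ k ∈ range n, poch a k * poch (-a) k / (k ! : ℝ) ^ 2)
      atTop (𝓝 (sin (π * a) / (π * a))) := by
    refine (tendsto_add_atTop_iff_nat 1).1 ?_
    simpa only [sum_range_succ_poch_mul_poch_neg_div_factorial_sq] using hprod
  rw [← tendsto_nhds_unique hsummable.hasSum.tendsto_sum_nat hpartial]
  exact hsummable.hasSum

theorem F21_self_neg_self (a : ℝ) :
    Real.pi * a * (∑' n : ℕ, poch a n * poch (-a) n / ((Nat.factorial n : ℝ)) ^ 2) =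
        Real.sin (Real.pi * a) ∧
      (a ≠ 0 → F21 a (-a) 1 1 = Real.sin (Real.pi * a) / (Real.pi * a)) := by
  rcases eq_or_ne a 0 with rfl | ha
  · simp
  have hsum := hasSum_poch_mul_poch_neg_div_factorial_sq ha
  refine ⟨?_, fun _ => ?_⟩
  · rw [hsum.tsum_eq, mul_div_cancel₀ _ (mul_ne_zero pi_ne_zero ha)]
  · simpa only [F21, poch_one, one_pow, mul_one, sq] using hsum.tsum_eq
end
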